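/- arXiv:0903.1573 — 3 statements merged into one kernel-verified Lean document; each statement's English description precedes it below -/
import Mathlib

section
/- Let G be a group and for each positive integer i let τ_i(G) = {g ∈ G : g^n ∈ γ_i(G) for some positive integer n} be the isolator of the i-th term γ_i(G) of the lower central series. If G is nilpotent, then for all positive integers i and j the commutator subgroup satisfies (τ_i(G), τ_j(G)) ≤ τ_{i+j}(G). -/
/-- The isolator `τ_i(G)` of the `i`-th term of the lower central series of `G`
(1-based indexing: `γ_i(G) = lowerCentralSeries G (i-1)`). -/
def isolator (G : Type*) [Group G] (i : ℕ) : Set G :=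
  {g : G | ∃ n : ℕ, 0 < n ∧ g ^ n ∈ (⊤ : Subgroup G).lowerCentralSeries (i - 1)}

/-!
Pass to `Q = G ⧸ γ_{i+j}`. There the images of `x ^ m ∈ γ_i` and `y ^ n ∈ γ_j` commute, since
`⁅γ_a, γ_b⁆ ≤ γ_{a+b}` by the three subgroups lemma. In a nilpotent group the elements of finite
order form a normal subgroup `T`: a nilpotent group generated by elements of finite order is a
torsion group, by induction along the lower central series, whose last term is central and
generated by commutators `⁅h, u⁆` with `⁅h, u⁆ ^ n = ⁅h ^ n, u⁆`. The quotient `Q ⧸ T` is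
torsion-free, and in a torsion-free nilpotent group commuting powers force commuting elements
(Mal'cev): the upper central factors `Z_{k+1} ⧸ Z_k` are torsion-free, and if `⁅a, g⁆ ∈ Z_{k+1}`
then `⁅a ^ n, g⁆ ≡ ⁅a, g⁆ ^ n` modulo `Z_k`, so `⁅a, g⁆` descends the upper central series
whenever `a ^ n` commutes with `g`. Hence `⁅x, y⁆` has finite order in `Q`.
-/

open scoped commutatorElement

theorem commutatorElement_pow_left_of_commute {G : Type*} [Group G] {x g : G}
    (h : Commute x ⁅x, g⁆) (n : ℕ) : ⁅x ^ n, g⁆ = ⁅x, g⁆ ^ n := by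
  induction n with
  | zero => simp
  | succ n ih =>
    calc ⁅x ^ (n + 1), g⁆ = x * ⁅x ^ n, g⁆ * x⁻¹ * ⁅x, g⁆ := by
          simp only [commutatorElement_def, pow_succ']; group
      _ = ⁅x, g⁆ ^ (n + 1) := by rw [ih, (h.pow_right n).eq, mul_inv_cancel_right, pow_succ]

namespace Subgroup

variable {G : Type*} [Group G]

theorem commutator_commutator_le_of_rotate {H₁ H₂ H₃ N : Subgroup G} [N.Normal]
    (h1 : ⁅⁅H₂, H₃⁆, H₁⁆ ≤ N) (h2 : ⁅⁅H₃, H₁⁆, H₂⁆ ≤ N) : ⁅⁅H₁, H₂⁆, H₃⁆ ≤ N := by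
  simp only [← QuotientGroup.ker_mk' N, ← map_eq_bot_iff, map_commutator] at h1 h2 ⊢
  exact commutator_commutator_eq_bot_of_rotate h1 h2

theorem commutator_lowerCentralSeries_le (a b : ℕ) :
    ⁅(⊤ : Subgroup G).lowerCentralSeries a, (⊤ : Subgroup G).lowerCentralSeries b⁆ ≤
      (⊤ : Subgroup G).lowerCentralSeries (a + b + 1) := by
  induction b generalizing a with
  | zero => exact le_rfl
  | succ b ih =>
    rw [lowerCentralSeries_succ, commutator_comm]
    refine commutator_commutator_le_of_rotate ?_ (commutator_mono (ih a) le_rfl)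
    rw [commutator_comm ⊤, ← lowerCentralSeries_succ,
      show a + (b + 1) + 1 = a + 1 + b + 1 by omega]
    exact ih (a + 1)

theorem lowerCentralSeries_le_center_of_succ_eq_bot {n : ℕ}
    (h : (⊤ : Subgroup G).lowerCentralSeries (n + 1) = ⊥) :
    (⊤ : Subgroup G).lowerCentralSeries n ≤ center G := by
  rwa [lowerCentralSeries_succ, commutator_eq_bot_iff_le_centralizer, coe_top,
    centralizer_univ] at h

theorem pow_commutatorElement_mem_upperCentralSeries {k n : ℕ} {x g : G}
    (hc : ⁅x, g⁆ ∈ upperCentralSeries G (k + 1)) (hn : ⁅x ^ n, g⁆ ∈ upperCentralSeries G k) :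
    ⁅x, g⁆ ^ n ∈ upperCentralSeries G k := by
  let π := QuotientGroup.mk' (upperCentralSeries G k)
  have hcomm : Commute (π x) ⁅π x, π g⁆ := by
    rw [← map_commutatorElement]
    refine (commutatorElement_eq_one_iff_commute.mp ?_).symm
    rw [← map_commutatorElement, ← MonoidHom.mem_ker, QuotientGroup.ker_mk']
    exact mem_upperCentralSeries_succ_iff.mp hc x
  rw [← QuotientGroup.ker_mk' (upperCentralSeries G k), MonoidHom.mem_ker] at hn ⊢
  rwa [map_pow, map_commutatorElement, ← commutatorElement_pow_left_of_commute hcomm,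
    ← map_pow, ← map_commutatorElement]

/- Torsion-freeness is spelled out as `htf` because `IsMulTorsionFree` asks for injective power
maps, which for nonabelian groups is the stronger uniqueness of roots. -/
theorem mem_upperCentralSeries_of_pow_mem (htf : ∀ g : G, IsOfFinOrder g → g = 1) {n : ℕ}
    (hn : n ≠ 0) :
    ∀ {k : ℕ} {x : G}, x ∈ upperCentralSeries G (k + 1) → x ^ n ∈ upperCentralSeries G k →
      x ∈ upperCentralSeries G k
  | 0, x, _, hxn => by
    rw [upperCentralSeries_zero, mem_bot] at hxn ⊢
    exact htf x (isOfFinOrder_iff_pow_eq_one.mpr ⟨n, Nat.pos_of_ne_zero hn, hxn⟩)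
  | k + 1, x, hx, hxn => mem_upperCentralSeries_succ_iff.mpr fun g =>
    have hxg := mem_upperCentralSeries_succ_iff.mp hx g
    mem_upperCentralSeries_of_pow_mem htf hn hxg
      (pow_commutatorElement_mem_upperCentralSeries hxg (mem_upperCentralSeries_succ_iff.mp hxn g))

theorem isOfFinOrder_of_mem_closure {S : Set G} (hS : S ⊆ center G)
    (hfin : ∀ s ∈ S, IsOfFinOrder s) {g : G} (hg : g ∈ closure S) : IsOfFinOrder g := by
  have hcen : closure S ≤ center G := (closure_le _).mpr hS
  induction hg using closure_induction with
  | mem s hs => exact hfin s hs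
  | one => exact IsOfFinOrder.one
  | mul a b ha _ iha ihb =>
    exact (show Commute a b from (mem_center_iff.mp (hcen ha) b).symm).isOfFinOrder_mul iha ihb
  | inv a _ ih => exact ih.inv

theorem closure_isOfFinOrder_eq_top_of_surjective {H : Type*} [Group H] {f : G →* H}
    (hf : Function.Surjective f) (hgen : closure {g : G | IsOfFinOrder g} = ⊤) :
    closure {h : H | IsOfFinOrder h} = ⊤ := by
  rw [eq_top_iff, ← map_top_of_surjective f hf, ← hgen, MonoidHom.map_closure]
  exact closure_mono (Set.image_subset_iff.mpr fun g hg => f.isOfFinOrder hg)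

theorem isMulTorsion_of_lowerCentralSeries_eq_bot {c : ℕ} :
    ∀ {G : Type*} [Group G], (⊤ : Subgroup G).lowerCentralSeries (c + 1) = ⊥ →
      closure {g : G | IsOfFinOrder g} = ⊤ → IsMulTorsion G := by
  induction c with
  | zero =>
    intro G _ hc hgen g
    refine isOfFinOrder_of_mem_closure ?_ (fun _ hs => hs) (hgen ▸ mem_top g)
    exact fun s _ => lowerCentralSeries_le_center_of_succ_eq_bot hc (mem_top s)
  | succ c ih =>
    intro G _ hc hgen
    set L := (⊤ : Subgroup G).lowerCentralSeries (c + 1)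
    have hL : L ≤ center G := lowerCentralSeries_le_center_of_succ_eq_bot hc
    have hquot : IsMulTorsion (G ⧸ L) := by
      have hπ := QuotientGroup.mk'_surjective L
      refine ih ?_ (closure_isOfFinOrder_eq_top_of_surjective hπ hgen)
      rw [← map_top_of_surjective _ hπ, ← map_lowerCentralSeries, map_eq_bot_iff,
        QuotientGroup.ker_mk']
    have hLcomm : L = ⁅⊤, (⊤ : Subgroup G).lowerCentralSeries c⁆ := commutator_comm _ _
    have hgens : ∀ h : G, ∀ u ∈ (⊤ : Subgroup G).lowerCentralSeries c,
        ⁅h, u⁆ ∈ center G ∧ IsOfFinOrder ⁅h, u⁆ := by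
      intro h u hu
      have hcen : ⁅h, u⁆ ∈ center G := hL (hLcomm ▸ commutator_mem_commutator (mem_top h) hu)
      obtain ⟨n, hn, hhn⟩ := (hquot h).exists_pow_eq_one
      have hhL : h ^ n ∈ L := (QuotientGroup.eq_one_iff _).mp hhn
      have hpow : ⁅h ^ n, u⁆ = 1 :=
        commutatorElement_eq_one_iff_commute.mpr (mem_center_iff.mp (hL hhL) u).symm
      rw [commutatorElement_pow_left_of_commute (mem_center_iff.mp hcen h)] at hpow
      exact ⟨hcen, isOfFinOrder_iff_pow_eq_one.mpr ⟨n, hn, hpow⟩⟩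
    have hLtors : ∀ l ∈ L, IsOfFinOrder l := by
      intro l hl
      rw [hLcomm, commutator_def] at hl
      refine isOfFinOrder_of_mem_closure ?_ ?_ hl <;> rintro _ ⟨h, -, u, hu, rfl⟩
      exacts [(hgens h u hu).1, (hgens h u hu).2]
    exact IsMulTorsion.extension_closed (QuotientGroup.ker_mk' L).symm hquot
      fun l => Submonoid.isOfFinOrder_coe.mp (hLtors l l.2)

end Subgroup

namespace Group.IsNilpotent

variable {G : Type*} [Group G] [IsNilpotent G]

theorem commute_of_commute_pow_left (htf : ∀ g : G, IsOfFinOrder g → g = 1) {a g : G} {n : ℕ}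
    (hn : n ≠ 0) (h : Commute (a ^ n) g) : Commute a g := by
  obtain ⟨c, hc⟩ := IsNilpotent.nilpotent G
  have hpow : ∀ k, ⁅a ^ n, g⁆ ∈ Subgroup.upperCentralSeries G k := fun k => by
    rw [commutatorElement_eq_one_iff_commute.mpr h]
    exact one_mem _
  have hbot : ⁅a, g⁆ ∈ Subgroup.upperCentralSeries G 0 :=
    Nat.decreasingInduction (motive := fun k _ => ⁅a, g⁆ ∈ Subgroup.upperCentralSeries G k)
      (fun k _ hk => Subgroup.mem_upperCentralSeries_of_pow_mem htf hn hk
        (Subgroup.pow_commutatorElement_mem_upperCentralSeries hk (hpow k)))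
      (by simp [hc]) (Nat.zero_le c)
  rw [Subgroup.upperCentralSeries_zero, Subgroup.mem_bot] at hbot
  exact commutatorElement_eq_one_iff_commute.mp hbot

theorem isMulTorsion_of_closure_isOfFinOrder_eq_top
    (hgen : Subgroup.closure {g : G | IsOfFinOrder g} = ⊤) : IsMulTorsion G := by
  obtain ⟨c, hc⟩ := Subgroup.nilpotent_iff_lowerCentralSeries.mp ‹IsNilpotent G›
  exact Subgroup.isMulTorsion_of_lowerCentralSeries_eq_bot
    (eq_bot_mono (Subgroup.lowerCentralSeries_antitone _ c.le_succ) hc) hgen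

theorem isOfFinOrder_mul {x y : G} (hx : IsOfFinOrder x) (hy : IsOfFinOrder y) :
    IsOfFinOrder (x * y) := by
  let K := Subgroup.closure {x, y}
  have hxK : x ∈ K := Subgroup.subset_closure (by simp)
  have hyK : y ∈ K := Subgroup.subset_closure (by simp)
  have hgen : Subgroup.closure {g : K | IsOfFinOrder g} = ⊤ := by
    rw [eq_top_iff, ← Subgroup.closure_preimage_eq_top ({x, y} : Set G)]
    refine Subgroup.closure_mono fun g hg => Submonoid.isOfFinOrder_coe.mp ?_
    rcases hg with hg | hg <;> simp_all
  exact Submonoid.isOfFinOrder_coe.mpr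
    (isMulTorsion_of_closure_isOfFinOrder_eq_top hgen ⟨x * y, K.mul_mem hxK hyK⟩)

variable (G) in
def torsion : Subgroup G where
  carrier := {g | IsOfFinOrder g}
  mul_mem' := isOfFinOrder_mul
  one_mem' := IsOfFinOrder.one
  inv_mem' := IsOfFinOrder.inv

theorem mem_torsion {g : G} : g ∈ torsion G ↔ IsOfFinOrder g := Iff.rfl

instance : (torsion G).Normal :=
  ⟨fun _ hn g => (MulAut.conj g).toMonoidHom.isOfFinOrder hn⟩

theorem eq_one_of_isOfFinOrder_quotient_torsion (q : G ⧸ torsion G) (hq : IsOfFinOrder q) :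
    q = 1 := by
  induction q using QuotientGroup.induction_on with
  | H g =>
    obtain ⟨n, hn, hgn⟩ := hq.exists_pow_eq_one
    rw [← QuotientGroup.mk_pow, QuotientGroup.eq_one_iff, mem_torsion] at hgn
    exact (QuotientGroup.eq_one_iff g).mpr (hgn.of_pow hn.ne')

theorem isOfFinOrder_commutatorElement_of_commute_pow {a b : G} {m n : ℕ} (hm : m ≠ 0)
    (hn : n ≠ 0) (h : Commute (a ^ m) (b ^ n)) : IsOfFinOrder ⁅a, b⁆ := by
  let π := QuotientGroup.mk' (torsion G)
  have hπ : Commute (π a ^ m) (π b ^ n) := by simpa only [map_pow] using h.map π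
  have hab : Commute (π a) (π b) :=
    (commute_of_commute_pow_left eq_one_of_isOfFinOrder_quotient_torsion hn
      (commute_of_commute_pow_left eq_one_of_isOfFinOrder_quotient_torsion hm hπ).symm).symm
  rw [← mem_torsion, ← QuotientGroup.ker_mk' (torsion G), MonoidHom.mem_ker,
    map_commutatorElement]
  exact commutatorElement_eq_one_iff_commute.mpr hab

end Group.IsNilpotent

theorem mem_isolator_iff {G : Type*} [Group G] {i : ℕ} {g : G} :
    g ∈ isolator G i ↔
      IsOfFinOrder (QuotientGroup.mk' ((⊤ : Subgroup G).lowerCentralSeries (i - 1)) g) := by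
  simp only [isolator, Set.mem_ofPred_eq, isOfFinOrder_iff_pow_eq_one, ← map_pow,
    ← MonoidHom.mem_ker, QuotientGroup.ker_mk']

theorem isolator_commutator_mem_general (G : Type*) [Group G] [Group.IsNilpotent G]
    (i j : ℕ) (x y : G)
    (hx : x ∈ isolator G i) (hy : y ∈ isolator G j) :
    x⁻¹ * y⁻¹ * x * y ∈ isolator G (i + j) := by
  obtain ⟨m, hm, hxm⟩ := hx
  obtain ⟨n, hn, hyn⟩ := hy
  set N := (⊤ : Subgroup G).lowerCentralSeries (i + j - 1)
  have hmem : ⁅x⁻¹ ^ m, y⁻¹ ^ n⁆ ∈ N := by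
    rw [inv_pow, inv_pow]
    refine Subgroup.lowerCentralSeries_antitone _ (by omega)
      (Subgroup.commutator_lowerCentralSeries_le (i - 1) (j - 1)
        (Subgroup.commutator_mem_commutator (inv_mem hxm) (inv_mem hyn)))
  rw [show x⁻¹ * y⁻¹ * x * y = ⁅x⁻¹, y⁻¹⁆ by simp [commutatorElement_def], mem_isolator_iff,
    map_commutatorElement]
  apply Group.IsNilpotent.isOfFinOrder_commutatorElement_of_commute_pow hm.ne' hn.ne'
  rw [← map_pow, ← map_pow, ← commutatorElement_eq_one_iff_commute, ← map_commutatorElement,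
    ← MonoidHom.mem_ker, QuotientGroup.ker_mk']
  exact hmem

/-- If `G` is nilpotent, then `(τ_i(G), τ_j(G)) ≤ τ_{i+j}(G)`: the commutator of an
element of `τ_i(G)` and an element of `τ_j(G)` lies in `τ_{i+j}(G)`. -/
theorem isolator_commutator_mem (G : Type*) [Group G] [Group.IsNilpotent G]
    (i j : ℕ) (hi : 1 ≤ i) (hj : 1 ≤ j) (x y : G)
    (hx : x ∈ isolator G i) (hy : y ∈ isolator G j) :
    x⁻¹ * y⁻¹ * x * y ∈ isolator G (i + j) :=
  isolator_commutator_mem_general G i j x y hx hy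
end

section
/- Let G be a torsion-free nilpotent group and x, y ∈ G with x^m = y^m for some positive integer m. Then x = y. -/
/-- A monoid is torsion-free if no nontrivial elements have finite order
(the Mathlib definition of December 2024, since removed). -/
def Monoid.IsTorsionFree (G : Type*) [Monoid G] : Prop :=
  ∀ g : G, g ≠ 1 → ¬IsOfFinOrder g

/-!
Induct on the nilpotency class. If `x ^ m = y ^ m`, then the conjugate
`y * x * y⁻¹ = ⁅y, x⁆ * x` also has `m`-th power `x ^ m`. Both it and `x` lie in
`⟨x⟩ ⊔ γ₂(G)`, which is abelian modulo `γ₃(G) = (⊤ : Subgroup G).lowerCentralSeries 2` and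
therefore has smaller class than `G` once that class is at least `2`. By induction
`y * x * y⁻¹ = x`, so `x` and `y` commute, and then `(x * y⁻¹) ^ m = 1` forces `x = y`.
-/

open Subgroup
open scoped commutatorElement

namespace Monoid.IsTorsionFree

variable {G : Type*} [Group G]

theorem subgroup (htf : IsTorsionFree G) (H : Subgroup G) : IsTorsionFree H :=
  fun g hg hfin => htf g (fun h => hg (Subtype.ext h)) (H.subtype.isOfFinOrder hfin)

theorem eq_of_pow_eq_pow_of_commute (htf : IsTorsionFree G) {x y : G} (hxy : Commute x y)
    {m : ℕ} (hm : m ≠ 0) (h : x ^ m = y ^ m) : x = y := by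
  have hpow : (x * y⁻¹) ^ m = 1 := by
    rw [hxy.inv_right.mul_pow, inv_pow, h, mul_inv_cancel]
  by_contra hne
  exact htf _ (mul_inv_eq_one.not.mpr hne) (isOfFinOrder_iff_pow_eq_one.mpr ⟨m, hm.bot_lt, hpow⟩)

end Monoid.IsTorsionFree

namespace Subgroup

variable {G : Type*} [Group G]

theorem commutator_zpowers_sup_eq_bot_of_le_center (g : G) {Z : Subgroup G}
    (hZ : Z ≤ center G) : ⁅zpowers g ⊔ Z, zpowers g ⊔ Z⁆ = ⊥ := by
  have hZc : ∀ H : Subgroup G, Z ≤ centralizer H := fun H =>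
    hZ.trans (center_le_centralizer (H : Set G))
  rw [commutator_eq_bot_iff_le_centralizer]
  refine sup_le ?_ (hZc _)
  rw [le_centralizer_iff]
  exact sup_le (le_centralizer_iff_isMulCommutative.mpr inferInstance) (hZc _)

theorem commutator_zpowers_sup_commutator_le (g : G) :
    ⁅zpowers g ⊔ _root_.commutator G, zpowers g ⊔ _root_.commutator G⁆ ≤
      (⊤ : Subgroup G).lowerCentralSeries 2 := by
  set N := (⊤ : Subgroup G).lowerCentralSeries 2
  rw [← QuotientGroup.ker_mk' N, ← map_eq_bot_iff, map_commutator, map_sup,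
    MonoidHom.map_zpowers]
  refine commutator_zpowers_sup_eq_bot_of_le_center _ ?_
  rintro _ ⟨c, hc, rfl⟩
  refine mem_center_iff.mpr fun q => ?_
  obtain ⟨q, rfl⟩ := QuotientGroup.mk'_surjective N q
  have hcq : ⁅c, q⁆ ∈ N := commutator_mem_commutator hc (mem_top q)
  rw [← QuotientGroup.ker_mk' N, MonoidHom.mem_ker, map_commutatorElement,
    commutatorElement_eq_one_iff_commute] at hcq
  exact hcq.eq.symm

theorem lowerCentralSeries_succ_le_of_commutator_le {S : Subgroup G}
    (hS : ⁅S, S⁆ ≤ (⊤ : Subgroup G).lowerCentralSeries 2) (n : ℕ) :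
    S.lowerCentralSeries (n + 1) ≤ (⊤ : Subgroup G).lowerCentralSeries (n + 2) := by
  induction n with
  | zero => exact hS
  | succ n ih => exact commutator_mono ih le_top

theorem nilpotencyClass_zpowers_sup_commutator_le [Group.IsNilpotent G] (g : G) {n : ℕ}
    (hG : Group.nilpotencyClass G ≤ n + 2) :
    Group.nilpotencyClass (zpowers g ⊔ _root_.commutator G : Subgroup G) ≤ n + 1 := by
  rw [← lowerCentralSeries_eq_bot_iff_nilpotencyClass_le, ← map_subtype_inj, map_bot,
    top_subtype_lowerCentralSeries, eq_bot_iff]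
  calc _ ≤ (⊤ : Subgroup G).lowerCentralSeries (n + 2) :=
        lowerCentralSeries_succ_le_of_commutator_le (commutator_zpowers_sup_commutator_le g) n
    _ = ⊥ := lowerCentralSeries_eq_bot_iff_nilpotencyClass_le.mpr hG

end Subgroup

theorem Monoid.IsTorsionFree.eq_of_pow_eq_pow_of_nilpotencyClass_le {G : Type*} [Group G]
    [Group.IsNilpotent G] (htf : IsTorsionFree G) {n : ℕ} (hG : Group.nilpotencyClass G ≤ n + 1)
    {x y : G} {m : ℕ} (hm : m ≠ 0) (h : x ^ m = y ^ m) : x = y := by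
  induction n generalizing G with
  | zero =>
    have : IsMulCommutative G := Group.IsNilpotent.nilpotencyClass_le_one_iff.mp hG
    exact htf.eq_of_pow_eq_pow_of_commute (mul_comm' x y) hm h
  | succ n ih =>
    set S := zpowers x ⊔ _root_.commutator G
    have hx : x ∈ S := mem_sup_left (mem_zpowers x)
    have hconj : ⁅y, x⁆ * x ∈ S :=
      mul_mem (mem_sup_right (commutator_mem_commutator (mem_top y) (mem_top x))) hx
    have hconj_pow : (⁅y, x⁆ * x) ^ m = x ^ m := by
      rw [commutatorElement_def, inv_mul_cancel_right, conj_pow, h, (Commute.self_pow y m).eq,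
        mul_inv_cancel_right]
    have hS : (⟨⁅y, x⁆ * x, hconj⟩ : S) = ⟨x, hx⟩ :=
      ih (htf.subgroup S) (nilpotencyClass_zpowers_sup_commutator_le x hG) (Subtype.ext hconj_pow)
    have hyx : Commute y x :=
      commutatorElement_eq_one_iff_commute.mp (mul_eq_right.mp (congrArg Subtype.val hS))
    exact htf.eq_of_pow_eq_pow_of_commute hyx.symm hm h

/-- In a torsion-free nilpotent group, `m`-th roots are unique: if `x^m = y^m`
for some positive integer `m`, then `x = y`. -/
theorem eq_of_pow_eq_pow_of_torsionFree_nilpotent (G : Type*) [Group G]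
    [Group.IsNilpotent G] (htf : Monoid.IsTorsionFree G)
    (x y : G) (m : ℕ) (hm : 0 < m) (h : x ^ m = y ^ m) : x = y :=
  htf.eq_of_pow_eq_pow_of_nilpotencyClass_le (Nat.le_succ _) hm.ne' h
end

section
/- Let L be a free Lie algebra of finite rank n ≥ 2 over a field K of characteristic zero, and let I be a proper ideal of L that is invariant under all Lie algebra endomorphisms of L (a fully invariant ideal). Then I is contained in the derived subalgebra L' = [L, L]. -/
/-!
If some `x ∈ I` lies outside `L'`, choose a linear form `φ` vanishing on `L'` with `φ x ≠ 0`.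
For every `y`, the map `z ↦ (φ z / φ x) • y` is a Lie endomorphism (brackets go to `0` on both
sides) sending `x` to `y`, so full invariance puts every `y` in `I`.
-/

namespace LieAlgebra

variable {K L : Type*} [Field K] [LieRing L] [LieAlgebra K L]

lemma lie_mem_derivedSeries_one (a b : L) : ⁅a, b⁆ ∈ derivedSeries K L 1 := by
  rw [derivedSeries_def, derivedSeriesOfIdeal_succ, derivedSeriesOfIdeal_zero]
  exact LieSubmodule.lie_mem_lie (LieSubmodule.mem_top a) (LieSubmodule.mem_top b)

lemma exists_dual_ne_zero_and_lie_eq_zero {x : L} (hx : x ∉ derivedSeries K L 1) :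
    ∃ φ : Module.Dual K L, φ x ≠ 0 ∧ ∀ a b : L, φ ⁅a, b⁆ = 0 := by
  rw [← LieSubmodule.mem_toSubmodule] at hx
  obtain ⟨φ, hφx, hφ⟩ := Submodule.exists_dual_map_eq_bot_of_notMem hx inferInstance
  exact ⟨φ, hφx, fun a b =>
    (Submodule.eq_bot_iff _).1 hφ _ (Submodule.mem_map_of_mem (lie_mem_derivedSeries_one a b))⟩

def rankOneLieHom (φ : Module.Dual K L) (hφ : ∀ a b : L, φ ⁅a, b⁆ = 0) (y : L) :
    L →ₗ⁅K⁆ L :=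
  { φ.smulRight y with
    map_lie' := fun {a b} => by
      simp [hφ, smul_lie, lie_smul] }

@[simp]
lemma rankOneLieHom_apply (φ : Module.Dual K L) (hφ : ∀ a b : L, φ ⁅a, b⁆ = 0) (y z : L) :
    rankOneLieHom φ hφ y z = φ z • y :=
  rfl

end LieAlgebra

theorem fully_invariant_ideal_le_derived_general (K : Type*) [Field K]
    (n : ℕ) (I : LieIdeal K (FreeLieAlgebra K (Fin n))) (hI : I ≠ ⊤)
    (hfi : ∀ f : FreeLieAlgebra K (Fin n) →ₗ⁅K⁆ FreeLieAlgebra K (Fin n),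
      ∀ x ∈ I, f x ∈ I) :
    I ≤ LieAlgebra.derivedSeries K (FreeLieAlgebra K (Fin n)) 1 := by
  intro x hx
  by_contra hxD
  obtain ⟨φ, hφx, hφ⟩ := LieAlgebra.exists_dual_ne_zero_and_lie_eq_zero hxD
  refine hI (eq_top_iff.2 fun y _ => ?_)
  have := hfi (LieAlgebra.rankOneLieHom φ hφ ((φ x)⁻¹ • y)) x hx
  rwa [LieAlgebra.rankOneLieHom_apply, smul_smul, mul_inv_cancel₀ hφx, one_smul] at this

/-- A proper fully invariant ideal of a free Lie algebra of finite rank `n ≥ 2` over a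
field of characteristic zero is contained in the derived subalgebra. -/
theorem fully_invariant_ideal_le_derived (K : Type*) [Field K] [CharZero K]
    (n : ℕ) (hn : 2 ≤ n) (I : LieIdeal K (FreeLieAlgebra K (Fin n))) (hI : I ≠ ⊤)
    (hfi : ∀ f : FreeLieAlgebra K (Fin n) →ₗ⁅K⁆ FreeLieAlgebra K (Fin n),
      ∀ x ∈ I, f x ∈ I) :
    I ≤ LieAlgebra.derivedSeries K (FreeLieAlgebra K (Fin n)) 1 :=
  fully_invariant_ideal_le_derived_general K n I hI hfi
end
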